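/- Let a ∈ ℝ and let D ≥ 1 be an integer. For every F ∈ 𝒫^D[a,∞) and every j ∈ {1,…,D}, the function x ↦ (−1)^{j+1} F_+^{(j)}(x) exists on [a,∞), is nonnegative, and is nonincreasing on [a,∞). -/

import Mathlib

/-!
Write `f j` for `F₊^(j)`. No multiple `σ * f j` with `1 ≤ j ≤ D` stays above a positive constant
near `+∞`: for `j = 1` this would make the bounded `F` unbounded, and for `j > 1` it would make
`σ * f (j - 1)` grow linearly. So a monotone `σ * f j` is `≤ 0` on `[a, ∞)`. Descending from
`j = D`, each `f j` is therefore monotone or antitone, since the sign of its right derivative is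
known; ascending from `f 1 ≥ 0`, each `(-1)^(j+1) * f j` is nonnegative, hence antitone, hence has a
nonpositive right derivative `-(-1)^(j+2) * f (j + 1)`.

A nonnegative right derivative only gives monotonicity for continuous functions, and `f (D - 1)`
need not be continuous; but it is the two-sided derivative of `f (D - 2)` on `(a, ∞)`, and that
suffices.
-/

open MeasureTheory Filter Set Topology

/-- The iterated (right) derivative: `rderiv F j` is the `j`-th order right derivative of `F`,
where the right derivative at `x` is the derivative within `Set.Ici x` at `x`. -/
noncomputable def rderiv (F : ℝ → ℝ) : ℕ → ℝ → ℝ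
  | 0 => F
  | j + 1 => fun x => derivWithin (rderiv F j) (Set.Ici x) x

/-- A probability distribution function on `ℝ`: nondecreasing, right-continuous,
with limit `0` at `-∞` and `1` at `+∞`. -/
structure IsCDF (F : ℝ → ℝ) : Prop where
  mono : Monotone F
  right_cont : ∀ x : ℝ, ContinuousWithinAt F (Set.Ici x) x
  tendsto_atBot : Filter.Tendsto F Filter.atBot (nhds 0)
  tendsto_atTop : Filter.Tendsto F Filter.atTop (nhds 1)

/-- Membership in `𝒫^D[a,∞)`: a probability distribution function that is `D-1` times
differentiable on `[a,∞)` (two-sided derivatives at interior points, right derivatives at the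
boundary), whose `D`-th order right derivative exists (and is finite) on `[a,∞)`
and is monotone there. -/
def MemPD (D : ℕ) (a : ℝ) (F : ℝ → ℝ) : Prop :=
  IsCDF F ∧
  (∀ j < D, ∀ x ∈ Set.Ici a, HasDerivWithinAt (rderiv F j) (rderiv F (j + 1) x) (Set.Ici x) x) ∧
  (∀ j : ℕ, j + 1 < D → ∀ x ∈ Set.Ioi a, HasDerivAt (rderiv F j) (rderiv F (j + 1) x) x) ∧
  (MonotoneOn (rderiv F D) (Set.Ici a) ∨ AntitoneOn (rderiv F D) (Set.Ici a))


theorem HasDerivWithinAt.eventually_nhdsGT_add_mul_lt {g : ℝ → ℝ} {k c t : ℝ}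
    (hg : HasDerivWithinAt g k (Ici t) t) (hc : c < k) :
    ∀ᶠ s in 𝓝[>] t, g t + c * (s - t) < g s := by
  have h := hasDerivWithinAt_iff_tendsto_slope.1 hg
  rw [Ici_sdiff_left] at h
  filter_upwards [h.eventually (lt_mem_nhds hc), self_mem_nhdsWithin] with s hs hts
  rw [slope_def_field, lt_div_iff₀ (sub_pos.2 hts)] at hs
  linarith

theorem HasDerivWithinAt.eventually_nhdsLT_add_mul_lt {g : ℝ → ℝ} {k c t : ℝ}
    (hg : HasDerivWithinAt g k (Iic t) t) (hc : k < c) :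
    ∀ᶠ s in 𝓝[<] t, g t + c * (s - t) < g s := by
  have h := hasDerivWithinAt_iff_tendsto_slope.1 hg
  rw [Iic_sdiff_right] at h
  filter_upwards [h.eventually (gt_mem_nhds hc), self_mem_nhdsWithin] with s hs hst
  rw [slope_def_field, div_lt_iff_of_neg (sub_neg.2 hst)] at hs
  linarith

theorem le_of_hasDerivAt_of_hasDerivWithinAt_Ici_pos {G g k : ℝ → ℝ} {x y : ℝ} (hxy : x ≤ y)
    (hG : ∀ t ∈ Icc x y, HasDerivAt G (g t) t)
    (hg : ∀ t ∈ Icc x y, HasDerivWithinAt g (k t) (Ici t) t)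
    (hk : ∀ t ∈ Icc x y, 0 < k t) : g x ≤ g y := by
  -- If `g y < σ < g x`, then `ψ t = G t - σ t` attains its maximum on `[x, y]` at an interior
  -- point `m` with `g m = σ`; as `g` has positive right derivative at `m`, `ψ` increases after `m`.
  by_contra! hyx
  obtain ⟨σ, hσy, hσx⟩ := exists_between hyx
  have hxy' : x < y := hxy.lt_of_ne (by rintro rfl; exact hyx.false)
  set ψ : ℝ → ℝ := fun t => G t - σ * t
  have hψ : ∀ t ∈ Icc x y, HasDerivAt ψ (g t - σ) t := fun t ht =>
    ((hG t ht).sub ((hasDerivAt_id' t).const_mul σ)).congr_deriv (by ring)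
  obtain ⟨m, hm, hmax⟩ := isCompact_Icc.exists_isMaxOn (nonempty_Icc.2 hxy)
    fun t ht => (hψ t ht).continuousAt.continuousWithinAt
  have no_rise : ∀ (l : Filter ℝ) [l.NeBot], (∀ᶠ s in l, ψ m < ψ s) →
      (∀ᶠ s in l, s ∈ Icc x y) → False :=
    fun l _ hrise hmem => by
      obtain ⟨s, hs, hsI⟩ := (hrise.and hmem).exists
      exact (hmax hsI).not_gt hs
  have hmy : m < y := by
    refine hm.2.lt_of_ne fun hmy => no_rise (𝓝[<] y) ?_ ?_
    · subst hmy
      simpa using ((hψ m hm).hasDerivWithinAt (s := Iic m)).eventually_nhdsLT_add_mul_lt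
        (c := 0) (by linarith)
    · filter_upwards [Ico_mem_nhdsLT hxy'] with s hs using Ico_subset_Icc_self hs
  have hgm_le : g m ≤ σ := by
    by_contra! hσm
    refine no_rise (𝓝[>] m) ?_ ?_
    · simpa using ((hψ m hm).hasDerivWithinAt (s := Ici m)).eventually_nhdsGT_add_mul_lt
        (c := 0) (by linarith)
    · filter_upwards [Ioc_mem_nhdsGT hmy] with s hs using ⟨hm.1.trans hs.1.le, hs.2⟩
  have hxm : x < m := hm.1.lt_of_ne (by rintro rfl; linarith)
  have hgm : g m = σ := by
    have := (hmax.isLocalMax (Icc_mem_nhds hxm hmy)).hasDerivAt_eq_zero (hψ m hm)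
    linarith
  obtain ⟨b, hb, hgb⟩ := mem_nhdsGT_iff_exists_Ioo_subset.1
    ((hg m hm).eventually_nhdsGT_add_mul_lt (hk m hm))
  obtain ⟨t, hmt, htb⟩ := exists_between (lt_min hb hmy)
  have htI : Icc m t ⊆ Icc x y := Icc_subset_Icc hm.1 (htb.le.trans (min_le_right _ _))
  obtain ⟨ξ, hξ, hslope⟩ := exists_hasDerivAt_eq_slope ψ (fun s => g s - σ) hmt
    (fun s hs => (hψ s (htI hs)).continuousAt.continuousWithinAt)
    (fun s hs => hψ s (htI (Ioo_subset_Icc_self hs)))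
  have hσξ : σ < g ξ := by
    have := hgb ⟨hξ.1, hξ.2.trans (htb.trans_le (min_le_left _ _))⟩
    simp only [zero_mul, add_zero, mem_ofPred_eq] at this
    linarith
  have : ψ m < ψ t := by
    have hpos := mul_pos (sub_pos.2 hσξ) (sub_pos.2 hmt)
    rw [hslope, div_mul_cancel₀ _ (sub_pos.2 hmt).ne'] at hpos
    linarith
  exact (hmax (htI (right_mem_Icc.2 hmt.le))).not_gt this

theorem monotoneOn_of_hasDerivAt_of_hasDerivWithinAt_Ici {G g k : ℝ → ℝ} {s : Set ℝ}
    (hs : s.OrdConnected) (hG : ∀ t ∈ s, HasDerivAt G (g t) t)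
    (hg : ∀ t ∈ s, HasDerivWithinAt g (k t) (Ici t) t) (hk : ∀ t ∈ s, 0 ≤ k t) :
    MonotoneOn g s := by
  intro x hx y hy hxy
  have hI := hs.out hx hy
  -- perturb by `ε t` to make the right derivative positive
  have hε : ∀ ε > 0, g x + ε * x ≤ g y + ε * y := fun ε hε =>
    le_of_hasDerivAt_of_hasDerivWithinAt_Ici_pos (G := fun t => G t + ε * (t ^ 2 / 2))
      (g := fun t => g t + ε * t) (k := fun t => k t + ε) hxy
      (fun t ht => (hG t (hI ht)).add (((hasDerivAt_pow 2 t).div_const 2).const_mul ε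
        |>.congr_deriv (by ring)))
      (fun t ht => (hg t (hI ht)).add ((hasDerivWithinAt_id t _).const_mul ε
        |>.congr_deriv (mul_one ε)))
      (fun t ht => by linarith [hk t (hI ht)])
  rcases hxy.eq_or_lt with rfl | hlt
  · rfl
  refine le_of_forall_pos_le_add fun δ hδ => ?_
  have key := hε (δ / (y - x)) (by positivity)
  have hδ' : δ / (y - x) * (y - x) = δ := div_mul_cancel₀ _ (sub_pos.2 hlt).ne'
  linarith

theorem monotoneOn_Ici_of_hasDerivAt_of_hasDerivWithinAt_Ici {G g k : ℝ → ℝ} {a : ℝ}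
    (hG : ∀ t ∈ Ioi a, HasDerivAt G (g t) t)
    (hg : ∀ t ∈ Ici a, HasDerivWithinAt g (k t) (Ici t) t) (hk : ∀ t ∈ Ici a, 0 ≤ k t) :
    MonotoneOn g (Ici a) := by
  have hmono : MonotoneOn g (Ioi a) := monotoneOn_of_hasDerivAt_of_hasDerivWithinAt_Ici
    ordConnected_Ioi hG (fun t ht => hg t (Ioi_subset_Ici_self ht))
    (fun t ht => hk t (Ioi_subset_Ici_self ht))
  rw [← Ioi_insert]
  exact hmono.insert_of_continuousWithinAt (nhdsGT_neBot a)
    ((hg a self_mem_Ici).continuousWithinAt.mono Ioi_subset_Ici_self)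

theorem antitoneOn_Ici_of_hasDerivAt_of_hasDerivWithinAt_Ici {G g k : ℝ → ℝ} {a : ℝ}
    (hG : ∀ t ∈ Ioi a, HasDerivAt G (g t) t)
    (hg : ∀ t ∈ Ici a, HasDerivWithinAt g (k t) (Ici t) t) (hk : ∀ t ∈ Ici a, k t ≤ 0) :
    AntitoneOn g (Ici a) := by
  have := monotoneOn_Ici_of_hasDerivAt_of_hasDerivWithinAt_Ici (fun t ht => (hG t ht).neg)
    (fun t ht => (hg t ht).neg) (fun t ht => neg_nonneg.2 (hk t ht))
  exact fun x hx y hy hxy => neg_le_neg_iff.1 (this hx hy hxy)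

theorem tendsto_atTop_of_hasDerivAt_of_hasDerivWithinAt_Ici {G g k : ℝ → ℝ} {c : ℝ} (hc : 0 < c)
    (h : ∀ᶠ t in atTop, HasDerivAt G (g t) t ∧ HasDerivWithinAt g (k t) (Ici t) t ∧ c ≤ k t) :
    Tendsto g atTop atTop := by
  obtain ⟨u, hu⟩ := eventually_atTop.1 h
  have hmono : MonotoneOn (fun t => g t - c * t) (Ici u) :=
    monotoneOn_of_hasDerivAt_of_hasDerivWithinAt_Ici (G := fun t => G t - c * (t ^ 2 / 2))
      (k := fun t => k t - c) ordConnected_Ici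
      (fun t ht => (hu t ht).1.sub (((hasDerivAt_pow 2 t).div_const 2).const_mul c
        |>.congr_deriv (by ring)))
      (fun t ht => (hu t ht).2.1.sub ((hasDerivWithinAt_id t _).const_mul c
        |>.congr_deriv (mul_one c)))
      (fun t ht => sub_nonneg.2 (hu t ht).2.2)
  refine tendsto_atTop_mono' _ (eventually_atTop.2 ⟨u, fun y hy => ?_⟩)
    (tendsto_atTop_add_const_left _ (g u - c * u) (tendsto_id.const_mul_atTop hc))
  have := hmono self_mem_Ici hy hy
  simp only [id]
  linarith

theorem MonotoneOn.add_mul_sub_le_of_hasDerivWithinAt_Ici {F F' : ℝ → ℝ} {c x y : ℝ}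
    (hF : MonotoneOn F (Icc x y)) (hxy : x ≤ y)
    (hF' : ∀ t ∈ Ico x y, HasDerivWithinAt F (F' t) (Ici t) t) (hc : ∀ t ∈ Ico x y, c < F' t) :
    F x + c * (y - x) ≤ F y := by
  set S := {t ∈ Icc x y | F x + c * (t - x) ≤ F t}
  have hxS : x ∈ S := ⟨left_mem_Icc.2 hxy, by simp⟩
  have hSbdd : BddAbove S := bddAbove_Icc.mono fun t ht => ht.1
  set s := sSup S
  have hs : s ∈ Icc x y := ⟨le_csSup hSbdd hxS, csSup_le ⟨x, hxS⟩ fun t ht => ht.1.2⟩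
  -- monotonicity of `F` makes `S` closed from the left, so it contains its supremum
  have hsS : F x + c * (s - x) ≤ F s := by
    have hsub : S ⊆ {t | F x + c * (t - x) ≤ F s} := fun t ht =>
      ht.2.trans (hF ht.1 hs (le_csSup hSbdd ht))
    exact closure_minimal hsub (isClosed_le (by fun_prop) continuous_const)
      (csSup_mem_closure ⟨x, hxS⟩ hSbdd)
  suffices s = y from this ▸ hsS
  refine hs.2.eq_of_not_lt fun hsy => ?_
  obtain ⟨t, hst, hty⟩ := (((hF' s ⟨hs.1, hsy⟩).eventually_nhdsGT_add_mul_lt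
    (hc s ⟨hs.1, hsy⟩)).and (Ioc_mem_nhdsGT hsy)).exists
  have htS : t ∈ S := ⟨⟨hs.1.trans hty.1.le, hty.2⟩, by linarith⟩
  exact (le_csSup hSbdd htS).not_gt hty.1

theorem Monotone.tendsto_atTop_of_hasDerivWithinAt_Ici {F F' : ℝ → ℝ} {c : ℝ} (hF : Monotone F)
    (hc : 0 < c) (h : ∀ᶠ t in atTop, HasDerivWithinAt F (F' t) (Ici t) t ∧ c ≤ F' t) :
    Tendsto F atTop atTop := by
  obtain ⟨u, hu⟩ := eventually_atTop.1 h
  refine tendsto_atTop_mono' _ (eventually_atTop.2 ⟨u, fun y hy => ?_⟩)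
    (tendsto_atTop_add_const_left _ (F u - c / 2 * u) (tendsto_id.const_mul_atTop (half_pos hc)))
  have := (hF.monotoneOn _).add_mul_sub_le_of_hasDerivWithinAt_Ici (c := c / 2) hy
    (fun t ht => (hu t ht.1).1) (fun t ht => by linarith [(hu t ht.1).2])
  simp only [id]
  linarith

theorem monotoneOn_or_antitoneOn_const_mul {α : Type*} [Preorder α] {f : α → ℝ} {s : Set α}
    (h : MonotoneOn f s ∨ AntitoneOn f s) (c : ℝ) :
    MonotoneOn (fun x => c * f x) s ∨ AntitoneOn (fun x => c * f x) s := by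
  rcases le_total 0 c with hc | hc <;> rcases h with h | h
  · exact .inl fun x hx y hy hxy => mul_le_mul_of_nonneg_left (h hx hy hxy) hc
  · exact .inr fun x hx y hy hxy => mul_le_mul_of_nonneg_left (h hx hy hxy) hc
  · exact .inr fun x hx y hy hxy => mul_le_mul_of_nonpos_left (h hx hy hxy) hc
  · exact .inl fun x hx y hy hxy => mul_le_mul_of_nonpos_left (h hx hy hxy) hc

theorem Monotone.rderiv_one_nonneg {F : ℝ → ℝ} (hF : Monotone F) (x : ℝ) : 0 ≤ rderiv F 1 x :=
  (hF.monotoneOn _).derivWithin_nonneg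

namespace MemPD

variable {D : ℕ} {a : ℝ} {F : ℝ → ℝ}

theorem not_eventually_le_mul_rderiv (hF : MemPD D a F) {j : ℕ} (hj : j < D) (σ : ℝ) {c : ℝ}
    (hc : 0 < c) : ¬ ∀ᶠ x in atTop, c ≤ σ * rderiv F (j + 1) x := by
  obtain ⟨hcdf, hright, htwo, -⟩ := hF
  induction j generalizing c with
  | zero =>
    intro h
    rcases le_or_gt σ 0 with hσ | hσ
    · obtain ⟨x, hx⟩ := h.exists
      linarith [mul_nonpos_of_nonpos_of_nonneg hσ (hcdf.mono.rderiv_one_nonneg x)]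
    · refine not_tendsto_atTop_of_tendsto_nhds (hcdf.tendsto_atTop.const_mul σ)
        ((hcdf.mono.const_mul hσ.le).tendsto_atTop_of_hasDerivWithinAt_Ici
          (F' := fun x => σ * rderiv F 1 x) hc ?_)
      filter_upwards [h, eventually_ge_atTop a] with x hx hax
      exact ⟨(hright 0 hj x hax).const_mul σ, hx⟩
  | succ j ih =>
    intro h
    refine ih (by omega) one_pos (Tendsto.eventually_ge_atTop ?_ 1)
    refine tendsto_atTop_of_hasDerivAt_of_hasDerivWithinAt_Ici (G := fun x => σ * rderiv F j x)
      (k := fun x => σ * rderiv F (j + 2) x) hc ?_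
    filter_upwards [h, eventually_gt_atTop a] with x hx hax
    exact ⟨(htwo j (by omega) x hax).const_mul σ, (hright (j + 1) hj x hax.le).const_mul σ, hx⟩

theorem mul_rderiv_nonpos_of_monotoneOn (hF : MemPD D a F) {j : ℕ} (hj : j < D) (σ : ℝ)
    (h : MonotoneOn (fun x => σ * rderiv F (j + 1) x) (Ici a)) :
    ∀ x ∈ Ici a, σ * rderiv F (j + 1) x ≤ 0 := by
  intro x hx
  by_contra! hpos
  exact hF.not_eventually_le_mul_rderiv hj σ hpos
    (eventually_atTop.2 ⟨x, fun y hy => h hx (hx.trans hy) hy⟩)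

theorem monotoneOn_or_antitoneOn_rderiv (hF : MemPD D a F) {j : ℕ} (hj : j < D) :
    MonotoneOn (rderiv F (j + 1)) (Ici a) ∨ AntitoneOn (rderiv F (j + 1)) (Ici a) := by
  have ⟨_, hright, htwo, htop⟩ := hF
  suffices ∀ i k, k + 1 + i = D →
      MonotoneOn (rderiv F (k + 1)) (Ici a) ∨ AntitoneOn (rderiv F (k + 1)) (Ici a) from
    this _ j (Nat.add_sub_cancel' hj)
  intro i
  induction i with
  | zero => exact fun k hk => hk ▸ htop
  | succ i ih =>
    intro k hk
    have hG : ∀ t ∈ Ioi a, HasDerivAt (rderiv F k) (rderiv F (k + 1) t) t := htwo k (by omega)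
    have hg : ∀ t ∈ Ici a, HasDerivWithinAt (rderiv F (k + 1)) (rderiv F (k + 2) t) (Ici t) t :=
      hright (k + 1) (by omega)
    rcases ih (k + 1) (by omega) with hmono | hanti
    · have hsign := hF.mul_rderiv_nonpos_of_monotoneOn (j := k + 1) (by omega) 1
        (by simpa only [one_mul] using hmono)
      exact .inr (antitoneOn_Ici_of_hasDerivAt_of_hasDerivWithinAt_Ici hG hg
        fun t ht => by simpa using hsign t ht)
    · have hsign := hF.mul_rderiv_nonpos_of_monotoneOn (j := k + 1) (by omega) (-1)
        (by simpa only [neg_one_mul] using hanti.neg)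
      exact .inl (monotoneOn_Ici_of_hasDerivAt_of_hasDerivWithinAt_Ici hG hg
        fun t ht => by simpa using hsign t ht)

theorem antitoneOn_mul_rderiv_of_nonneg (hF : MemPD D a F) {j : ℕ} (hj : j < D) (σ : ℝ)
    (hnn : ∀ x ∈ Ici a, 0 ≤ σ * rderiv F (j + 1) x) :
    AntitoneOn (fun x => σ * rderiv F (j + 1) x) (Ici a) := by
  rcases monotoneOn_or_antitoneOn_const_mul (hF.monotoneOn_or_antitoneOn_rderiv hj) σ
    with hmono | hanti
  · have hnp := hF.mul_rderiv_nonpos_of_monotoneOn hj σ hmono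
    exact fun x hx y hy _ => (hnp y hy).trans (hnn x hx)
  · exact hanti

theorem neg_one_pow_mul_rderiv_nonneg_and_antitoneOn (hF : MemPD D a F) {j : ℕ} (hj : j < D) :
    (∀ x ∈ Ici a, 0 ≤ (-1 : ℝ) ^ (j + 1 + 1) * rderiv F (j + 1) x) ∧
    AntitoneOn (fun x => (-1 : ℝ) ^ (j + 1 + 1) * rderiv F (j + 1) x) (Ici a) := by
  suffices hnn : ∀ x ∈ Ici a, 0 ≤ (-1 : ℝ) ^ (j + 1 + 1) * rderiv F (j + 1) x from
    ⟨hnn, hF.antitoneOn_mul_rderiv_of_nonneg hj _ hnn⟩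
  have ⟨hcdf, hright, _⟩ := hF
  induction j with
  | zero => simpa using fun x _ => hcdf.mono.rderiv_one_nonneg x
  | succ j ih =>
    intro x hx
    have hanti := (hF.antitoneOn_mul_rderiv_of_nonneg (j := j) (by omega) _ (ih (by omega))).mono
      (Ici_subset_Ici.2 hx)
    have hder := ((hright (j + 1) hj x hx).const_mul ((-1 : ℝ) ^ (j + 1 + 1))).derivWithin
      (uniqueDiffWithinAt_Ici x)
    have := hanti.derivWithin_nonpos (x := x)
    rw [hder] at this
    linear_combination this

end MemPD

theorem stmt_2_general (D : ℕ) (a : ℝ) (F : ℝ → ℝ) (hF : MemPD D a F)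
    (j : ℕ) (hj1 : 1 ≤ j) (hjD : j ≤ D) :
    (∀ x ∈ Set.Ici a, HasDerivWithinAt (rderiv F (j - 1)) (rderiv F j x) (Set.Ici x) x) ∧
    (∀ x ∈ Set.Ici a, 0 ≤ (-1 : ℝ) ^ (j + 1) * rderiv F j x) ∧
    AntitoneOn (fun x => (-1 : ℝ) ^ (j + 1) * rderiv F j x) (Set.Ici a) := by
  obtain ⟨i, rfl⟩ : ∃ i, j = i + 1 := ⟨j - 1, by omega⟩
  have hi : i < D := by omega
  exact ⟨hF.2.1 i hi, hF.neg_one_pow_mul_rderiv_nonneg_and_antitoneOn hi⟩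

/-- For `D ≥ 1`, `F ∈ 𝒫^D[a,∞)` and `1 ≤ j ≤ D`, the function
`x ↦ (-1)^(j+1) F₊^(j)(x)` exists on `[a,∞)` (as the right derivative of the `(j-1)`-th
derivative), is nonnegative there, and is nonincreasing on `[a,∞)`. -/
theorem stmt_2 (D : ℕ) (hD : 1 ≤ D) (a : ℝ) (F : ℝ → ℝ) (hF : MemPD D a F)
    (j : ℕ) (hj1 : 1 ≤ j) (hjD : j ≤ D) :
    (∀ x ∈ Set.Ici a, HasDerivWithinAt (rderiv F (j - 1)) (rderiv F j x) (Set.Ici x) x) ∧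
    (∀ x ∈ Set.Ici a, 0 ≤ (-1 : ℝ) ^ (j + 1) * rderiv F j x) ∧
    AntitoneOn (fun x => (-1 : ℝ) ^ (j + 1) * rderiv F j x) (Set.Ici a) :=
  stmt_2_general D a F hF j hj1 hjD
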